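/- In the ring of symmetric functions (or polynomials in n variables), for a prime p the truncated complete symmetric functions satisfy h'_r = Σ_{i≥0} (-1)^i F^p(e_i) · h_{r-ip}, where F^p(e_i) denotes the i-th elementary symmetric polynomial evaluated at x₁^p,...,x_n^p, h_d is the complete symmetric polynomial, and h'_r = Σ_{a₁+⋯+a_n=r, 0≤a_i<p} x₁^{a₁}⋯x_n^{a_n}. -/

import Mathlib

/-!
Compare coefficients of a monomial `x^m` of degree `r`, and let `T = {j | p ≤ m j}`. The monomial
`∏_{j ∈ S} x_j^p` of `F^p(e_i)` divides `x^m` exactly when `S ⊆ T`, and the quotient then has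
degree `r - i p`, so the coefficient of `x^m` in `F^p(e_i) h_{r-ip}` is the number of `i`-subsets
of `T`. The right-hand side therefore has coefficient `∑_i (-1)^i C(|T|, i)`, which is `1` if `T`
is empty, i.e. if all exponents of `m` are below `p`, and `0` otherwise: the coefficient in `h'_r`.
-/

open MvPolynomial

/-- The complete homogeneous symmetric polynomial `h_d` in `n` variables. -/
noncomputable def fullH (n d : ℕ) : MvPolynomial (Fin n) ℤ :=
  ∑ s ∈ (Fintype.piFinset fun _ : Fin n => Finset.range (d + 1)).filter
      (fun s => ∑ i, s i = d),
    ∏ i, X i ^ s i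

/-- The `p`-truncated complete symmetric polynomial
`h'_r = Σ_{a₁+⋯+a_n=r, 0 ≤ aᵢ < p} x₁^{a₁}⋯x_n^{a_n}`. -/
noncomputable def truncH (n p r : ℕ) : MvPolynomial (Fin n) ℤ :=
  ∑ s ∈ (Fintype.piFinset fun _ : Fin n => Finset.range p).filter
      (fun s => ∑ i, s i = r),
    ∏ i, X i ^ s i

/-- The elementary symmetric polynomial `e_i` in `n` variables. -/
noncomputable def elemE (n i : ℕ) : MvPolynomial (Fin n) ℤ :=
  ∑ s ∈ Finset.powersetCard i (Finset.univ : Finset (Fin n)), ∏ j ∈ s, X j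

/-- The Frobenius substitution `F^p`, replacing each variable `xⱼ` by `xⱼ^p`. -/
noncomputable def frobSub (n p : ℕ) (f : MvPolynomial (Fin n) ℤ) : MvPolynomial (Fin n) ℤ :=
  MvPolynomial.aeval (fun j : Fin n => (X j : MvPolynomial (Fin n) ℤ) ^ p) f

open Finset Finsupp

section Monomials

variable {σ R : Type*} [CommSemiring R]

lemma prod_X_pow_eq_monomial_equivFunOnFinite [Fintype σ] (s : σ → ℕ) :
    ∏ i, (X i : MvPolynomial σ R) ^ s i = monomial (equivFunOnFinite.symm s) 1 := by
  rw [monomial_eq, C_1, one_mul, Finsupp.prod_fintype]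
  · rfl
  · simp only [pow_zero, implies_true]

lemma coeff_sum_prod_X_pow [Fintype σ] (A : Finset (σ → ℕ)) (m : σ →₀ ℕ) :
    coeff m (∑ s ∈ A, ∏ i, (X i : MvPolynomial σ R) ^ s i) =
      if ⇑m ∈ A then 1 else 0 := by
  classical
  simp only [prod_X_pow_eq_monomial_equivFunOnFinite, coeff_sum, coeff_monomial,
    Equiv.symm_apply_eq]
  exact sum_ite_eq' A (⇑m) _

noncomputable def powIndicator (p : ℕ) (S : Finset σ) : σ →₀ ℕ := ∑ j ∈ S, single j p

lemma powIndicator_apply [DecidableEq σ] (p : ℕ) (S : Finset σ) (j : σ) :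
    powIndicator p S j = if j ∈ S then p else 0 := by
  simp [powIndicator, Finsupp.finsetSum_apply, single_apply]

lemma powIndicator_le_iff [DecidableEq σ] {p : ℕ} {S : Finset σ} {m : σ →₀ ℕ} :
    powIndicator p S ≤ m ↔ ∀ j ∈ S, p ≤ m j := by
  simp only [Finsupp.le_def, powIndicator_apply]
  refine forall_congr' fun j => ?_
  split_ifs with hj <;> simp [hj]

lemma degree_powIndicator (p : ℕ) (S : Finset σ) : degree (powIndicator p S) = #S * p := by
  simp [powIndicator, map_sum]

lemma prod_X_pow_eq_monomial_powIndicator (p : ℕ) (S : Finset σ) :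
    ∏ j ∈ S, (X j : MvPolynomial σ R) ^ p = monomial (powIndicator p S) 1 := by
  simp [powIndicator, monomial_sum_one, X_pow_eq_monomial]

end Monomials

lemma sum_range_neg_one_pow_mul_card_powersetCard {α : Type*} [DecidableEq α] (T : Finset α)
    {N : ℕ} (hN : #T ≤ N) :
    ∑ i ∈ range (N + 1), (-1 : ℤ) ^ i * #(powersetCard i T) = if T = ∅ then 1 else 0 := by
  simp_rw [card_powersetCard]
  rw [← sum_subset (range_subset_range.mpr (Nat.succ_le_succ hN)),
    Int.alternating_sum_range_choose]
  · simp
  · intro i _ hi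
    rw [Nat.choose_eq_zero_of_lt (by simpa using hi), Nat.cast_zero, mul_zero]

variable {n : ℕ}

lemma coeff_fullH (m : Fin n →₀ ℕ) (d : ℕ) :
    coeff m (fullH n d) = if degree m = d then 1 else 0 := by
  rw [fullH, coeff_sum_prod_X_pow, degree_eq_sum]
  congr 1
  simp only [mem_filter, Fintype.mem_piFinset, mem_range, eq_iff_iff, and_iff_right_iff_imp]
  intro h i
  have := h ▸ single_le_sum (fun j _ => Nat.zero_le (m j)) (mem_univ i)
  omega

lemma coeff_truncH (m : Fin n →₀ ℕ) (p r : ℕ) :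
    coeff m (truncH n p r) = if (∀ i, m i < p) ∧ degree m = r then 1 else 0 := by
  simp [truncH, coeff_sum_prod_X_pow, degree_eq_sum]

lemma frobSub_elemE (p i : ℕ) :
    frobSub n p (elemE n i) = ∑ S ∈ powersetCard i univ, monomial (powIndicator p S) 1 := by
  simp [frobSub, elemE, map_sum, map_prod, prod_X_pow_eq_monomial_powIndicator]

lemma coeff_frobSub_elemE_mul_fullH (p i d : ℕ) (m : Fin n →₀ ℕ) :
    coeff m (frobSub n p (elemE n i) * fullH n d) =
      if degree m = i * p + d then (#(powersetCard i {j | p ≤ m j}) : ℤ) else 0 := by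
  set T : Finset (Fin n) := {j | p ≤ m j}
  have hle_iff (S : Finset (Fin n)) : powIndicator p S ≤ m ↔ S ⊆ T := by
    simp [powIndicator_le_iff, subset_iff, T]
  have hterm : ∀ S ∈ powersetCard i univ,
      coeff m (monomial (powIndicator p S) 1 * fullH n d) =
        if S ⊆ T ∧ degree m = i * p + d then 1 else 0 := by
    intro S hS
    rw [coeff_monomial_mul', coeff_fullH, one_mul]
    by_cases hle : powIndicator p S ≤ m
    · have hdeg : degree m = degree (m - powIndicator p S) + i * p := by
        rw [← (mem_powersetCard.mp hS).2, ← degree_powIndicator, ← map_add,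
          tsub_add_cancel_of_le hle]
      simp only [if_pos hle, (hle_iff S).mp hle, true_and]
      congr 1
      simp only [eq_iff_iff]
      omega
    · simp [hle, (hle_iff S).not.mp hle]
  rw [frobSub_elemE, Finset.sum_mul, coeff_sum, sum_congr rfl hterm, sum_boole]
  split_ifs with hm
  · congr
    ext S
    simp [mem_powersetCard, hm, and_comm]
  · simp [hm]

lemma coeff_neg_one_pow_mul_frobSub_elemE_mul_fullH (p i r : ℕ) (m : Fin n →₀ ℕ) :
    coeff m (if i * p ≤ r then
        (-1 : MvPolynomial (Fin n) ℤ) ^ i * frobSub n p (elemE n i) * fullH n (r - i * p)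
      else 0) =
      if degree m = r then (-1) ^ i * (#(powersetCard i {j | p ≤ m j}) : ℤ) else 0 := by
  have hC : (-1 : MvPolynomial (Fin n) ℤ) ^ i = C ((-1) ^ i) := by simp
  split_ifs with hip hm hm
  · rw [mul_assoc, hC, coeff_C_mul, coeff_frobSub_elemE_mul_fullH, if_pos (by omega)]
  · rw [mul_assoc, hC, coeff_C_mul, coeff_frobSub_elemE_mul_fullH, if_neg (by omega), mul_zero]
  · -- a set of `i` variables each of degree at least `p` in `m` forces `i * p ≤ degree m`
    suffices powersetCard i {j | p ≤ m j} = ∅ by simp [this]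
    refine eq_empty_of_forall_notMem fun S hS => hip ?_
    obtain ⟨hsub, rfl⟩ := mem_powersetCard.mp hS
    rw [← hm, ← degree_powIndicator]
    exact degree_mono (powIndicator_le_iff.mpr fun j hj => by simpa using hsub hj)
  · rw [coeff_zero]

theorem stmt_9_general (n p r : ℕ) :
    truncH n p r =
      ∑ i ∈ Finset.range (n + 1),
        if i * p ≤ r then
          (-1 : MvPolynomial (Fin n) ℤ) ^ i * frobSub n p (elemE n i) * fullH n (r - i * p)
        else 0 := by
  ext m
  simp only [coeff_truncH, coeff_sum, coeff_neg_one_pow_mul_frobSub_elemE_mul_fullH]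
  by_cases hm : degree m = r
  · have hcard : #({j | p ≤ m j} : Finset (Fin n)) ≤ n := (card_le_univ _).trans_eq (by simp)
    simp only [hm, and_true, if_true]
    rw [sum_range_neg_one_pow_mul_card_powersetCard _ hcard]
    simp [filter_eq_empty_iff]
  · simp [hm]

/-- `h'_r = Σ_{i ≥ 0} (-1)^i F^p(e_i) · h_{r-ip}` in `ℤ[x₁,…,x_n]` (terms with
`r - ip < 0` vanish since `h_d = 0` for `d < 0`, and `e_i = 0` for `i > n`). -/
theorem stmt_9 (n p r : ℕ) (hp : p.Prime) :
    truncH n p r =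
      ∑ i ∈ Finset.range (n + 1),
        if i * p ≤ r then
          (-1 : MvPolynomial (Fin n) ℤ) ^ i * frobSub n p (elemE n i) * fullH n (r - i * p)
        else 0 :=
  stmt_9_general n p r
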